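/- arXiv:math/0302091 — 4 statements merged into one kernel-verified Lean document; each statement's English description precedes it below -/
import Mathlib

section
/- Let h ≥ 2, let f : ℤ → ℕ∞ have f⁻¹(0) finite, and let φ : ℕ → ℝ be nonnegative with φ(x) → ∞. Then there exist infinitely many sets A of integers such that the restricted representation function r̂_{A,h}(n), counting h-element subsets of A summing to n, equals f(n) for all n ∈ ℤ, and A(−x,x) ≤ φ(x) for all x ≥ 0. -/
/-- The restricted representation function of order `h` of `A ⊆ ℤ`: the number
of `h`-element subsets of `A` with sum `n`, valued in `ℕ∞`. -/
noncomputable def restRepFn (A : Set ℤ) (h : ℕ) (n : ℤ) : ℕ∞ :=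
  {S : Finset ℤ | ↑S ⊆ A ∧ S.card = h ∧ ∑ a ∈ S, a = n}.encard

/-!
Each set is the increasing union of finite sets `A₀ ⊆ A₁ ⊆ ⋯` built greedily, visiting every
target `n` infinitely often. If `n` still has fewer than `f n` representations, we add a block `C`
of `h` huge integers with sum `n`: the scaled binary block `{M, 2M, …, 2ʰ⁻²M}` completed by
`n - ∑`, whose subset sums are well separated. Then the only new representation of `n` is `C`
itself, and any other new representation is of a number so large that `f` does not vanish there
and it had no representation before; it is unique because sums of fewer than `h` elements of the
old set are distinct, an invariant that the block preserves. Placing the blocks far enough out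
keeps the counting function below `φ`, and placing them all beyond an arbitrary bound gives
infinitely many different sets.
-/

open Finset

lemma abs_sum_le_card_mul {S : Finset ℤ} {K : ℤ} (hK : ∀ a ∈ S, |a| ≤ K) :
    |∑ a ∈ S, a| ≤ S.card * K :=
  calc |∑ a ∈ S, a| ≤ ∑ a ∈ S, |a| := abs_sum_le_sum_abs _ _
    _ ≤ S.card • K := sum_le_card_nsmul _ _ _ hK
    _ = S.card * K := nsmul_eq_mul _ _

lemma le_sum_of_forall_le {T : Finset ℤ} {M : ℤ} (hM : 0 ≤ M) (hT : ∀ g ∈ T, M ≤ g)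
    (hne : T.Nonempty) : M ≤ ∑ g ∈ T, g := by
  obtain ⟨g, hg⟩ := hne
  exact (hT g hg).trans (single_le_sum (f := id) (fun g hg => hM.trans (hT g hg)) hg)

def scaledPowersOfTwo (M : ℤ) (m : ℕ) : Finset ℤ :=
  (range m).image fun i => M * 2 ^ i

section scaledPowersOfTwo

variable {M : ℤ} {m : ℕ}

lemma le_of_mem_scaledPowersOfTwo (hM : 0 ≤ M) {g : ℤ} (hg : g ∈ scaledPowersOfTwo M m) :
    M ≤ g := by
  obtain ⟨i, -, rfl⟩ := mem_image.1 hg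
  exact le_mul_of_one_le_right hM (one_le_pow₀ (by norm_num))

lemma card_scaledPowersOfTwo (hM : M ≠ 0) : (scaledPowersOfTwo M m).card = m := by
  rw [scaledPowersOfTwo, card_image_of_injective _ fun i j hij => by simpa [hM] using hij,
    card_range]

/-- The subset sums are `M` times distinct binary numbers. -/
lemma eq_of_abs_sub_lt_of_subset_scaledPowersOfTwo (hM : 0 < M) {J J' : Finset ℤ}
    (hJ : J ⊆ scaledPowersOfTwo M m) (hJ' : J' ⊆ scaledPowersOfTwo M m)
    (hlt : |∑ g ∈ J, g - ∑ g ∈ J', g| < M) : J = J' := by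
  have hinj : Set.InjOn (fun i : ℕ => M * 2 ^ i) ↑(range m) := fun i _ j _ hij => by
    simpa [hM.ne'] using hij
  obtain ⟨s, hs, rfl⟩ := subset_image_iff.1 hJ
  obtain ⟨s', hs', rfl⟩ := subset_image_iff.1 hJ'
  rw [sum_image (hinj.mono hs), sum_image (hinj.mono hs'), ← mul_sum, ← mul_sum, ← mul_sub,
    abs_mul, abs_of_pos hM, mul_lt_iff_lt_one_right hM, Int.abs_lt_one_iff, sub_eq_zero] at hlt
  have : ∑ i ∈ s, 2 ^ i = ∑ i ∈ s', 2 ^ i := by exact_mod_cast hlt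
  rw [geomSum_injective le_rfl this]

end scaledPowersOfTwo

/-- `C` behaves like a dissociated set at scale `L`, except that `C` itself and `∅` may have
close sums (in the application `∑ C = n` is small). -/
def SubsetSumsSeparated (L : ℤ) (C : Finset ℤ) : Prop :=
  ∀ I ⊆ C, ∀ J ⊆ C, |∑ i ∈ I, i - ∑ j ∈ J, j| ≤ L → I = J ∨ (I = C ∧ J = ∅) ∨ (I = ∅ ∧ J = C)

lemma eq_insert_and_eq_empty_of_abs_sub_le {G I J : Finset ℤ} {n L : ℤ}
    (hG : ∀ g ∈ G, 2 * L + 1 ≤ g) (hn : |n| ≤ L)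
    (hI : I ⊆ insert (n - ∑ g ∈ G, g) G) (hxI : n - ∑ g ∈ G, g ∈ I) (hJ : J ⊆ G)
    (hIJ : |∑ i ∈ I, i - ∑ j ∈ J, j| ≤ L) :
    I = insert (n - ∑ g ∈ G, g) G ∧ J = ∅ := by
  have hL : 0 ≤ L := (abs_nonneg n).trans hn
  set x := n - ∑ g ∈ G, g
  have hI' : I.erase x ⊆ G := subset_insert_iff.1 hI
  have hsumI : ∑ i ∈ I, i = n - ∑ g ∈ G \ I.erase x, g := by
    have hI : x + ∑ i ∈ I.erase x, i = ∑ i ∈ I, i := add_sum_erase I (fun i => i) hxI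
    have hG : ∑ g ∈ G \ I.erase x, g + ∑ g ∈ I.erase x, g = ∑ g ∈ G, g := sum_sdiff hI'
    linarith
  have hpos : ∀ T ⊆ G, T.Nonempty → 2 * L + 1 ≤ ∑ g ∈ T, g := fun T hT =>
    le_sum_of_forall_le (by linarith) fun g hg => hG g (hT hg)
  have hnonneg : ∀ T ⊆ G, 0 ≤ ∑ g ∈ T, g := fun T hT =>
    sum_nonneg fun g hg => by linarith [hG g (hT hg)]
  by_contra hne
  have hbig : 2 * L + 1 ≤ ∑ g ∈ G \ I.erase x, g + ∑ j ∈ J, j := by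
    by_cases hrest : (G \ I.erase x).Nonempty
    · linarith [hpos _ sdiff_subset hrest, hnonneg J hJ]
    · refine le_add_of_nonneg_of_le (hnonneg _ sdiff_subset) (hpos J hJ ?_)
      rw [nonempty_iff_ne_empty]
      rintro rfl
      refine hne ⟨?_, rfl⟩
      rw [not_nonempty_iff_eq_empty, sdiff_eq_empty_iff_subset] at hrest
      rw [← insert_erase hxI, hI'.antisymm hrest]
  rw [hsumI, abs_le] at hIJ
  rw [abs_le] at hn
  linarith

theorem exists_subsetSumsSeparated {h : ℕ} (hh : 2 ≤ h) {n L : ℤ} (hn : |n| ≤ L) :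
    ∃ C : Finset ℤ, C.card = h ∧ ∑ c ∈ C, c = n ∧ (∀ c ∈ C, L < |c|) ∧
      SubsetSumsSeparated L C := by
  have hL : 0 ≤ L := (abs_nonneg n).trans hn
  set G := scaledPowersOfTwo (2 * L + 1) (h - 1)
  set x := n - ∑ g ∈ G, g
  have hG : ∀ g ∈ G, 2 * L + 1 ≤ g := fun g => le_of_mem_scaledPowersOfTwo (by linarith)
  have hx : x < -L := by
    have hGne : G.Nonempty := by
      rw [← card_pos, card_scaledPowersOfTwo (by linarith)]
      omega
    have := le_sum_of_forall_le (by linarith) hG hGne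
    rw [abs_le] at hn
    linarith
  have hxG : x ∉ G := fun hxG => by linarith [hG x hxG]
  refine ⟨insert x G, ?_, ?_, ?_, ?_⟩
  · rw [card_insert_of_notMem hxG, card_scaledPowersOfTwo (by linarith)]
    omega
  · rw [sum_insert hxG]
    ring
  · intro c hc
    rcases mem_insert.1 hc with rfl | hcG
    · rw [abs_of_neg (by linarith)]
      linarith
    · rw [abs_of_pos (by linarith [hG c hcG])]
      linarith [hG c hcG]
  · intro I hI J hJ hIJ
    by_cases hxI : x ∈ I <;> by_cases hxJ : x ∈ J
    · left
      have hsub : |∑ i ∈ I.erase x, i - ∑ j ∈ J.erase x, j| < 2 * L + 1 := by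
        rw [← add_sum_erase I _ hxI, ← add_sum_erase J _ hxJ] at hIJ
        rw [add_sub_add_left_eq_sub] at hIJ
        linarith
      rw [← insert_erase hxI, ← insert_erase hxJ,
        eq_of_abs_sub_lt_of_subset_scaledPowersOfTwo (by linarith) (subset_insert_iff.1 hI)
          (subset_insert_iff.1 hJ) hsub]
    · exact Or.inr (Or.inl (eq_insert_and_eq_empty_of_abs_sub_le hG hn hI hxI
        ((subset_insert_iff_of_notMem hxJ).1 hJ) hIJ))
    · rw [abs_sub_comm] at hIJ
      exact Or.inr (Or.inr (eq_insert_and_eq_empty_of_abs_sub_le hG hn hJ hxJ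
        ((subset_insert_iff_of_notMem hxI).1 hI) hIJ).symm)
    · exact Or.inl (eq_of_abs_sub_lt_of_subset_scaledPowersOfTwo (by linarith)
        ((subset_insert_iff_of_notMem hxI).1 hI) ((subset_insert_iff_of_notMem hxJ).1 hJ)
        (by linarith))

def repFinset (h : ℕ) (A : Finset ℤ) (n : ℤ) : Finset (Finset ℤ) :=
  (A.powersetCard h).filter fun S => ∑ a ∈ S, a = n

def newRepFinset (h : ℕ) (A C : Finset ℤ) (m : ℤ) : Finset (Finset ℤ) :=
  (repFinset h (A ∪ C) m).filter fun S => ¬S ⊆ A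

def SmallSubsetSumsInjective (h : ℕ) (A : Finset ℤ) : Prop :=
  ∀ S ⊆ A, ∀ S' ⊆ A, S.card = S'.card → S.card < h → ∑ a ∈ S, a = ∑ a ∈ S', a → S = S'

/-- Uniqueness of the sums of fewer than `h` elements is what lets a new block of `h` large
elements create at most one new representation of each number. -/
structure IsAdmissible (h : ℕ) (f : ℤ → ℕ∞) (A : Finset ℤ) : Prop where
  card_repFinset_le (m : ℤ) : ((repFinset h A m).card : ℕ∞) ≤ f m
  smallSubsetSumsInjective : SmallSubsetSumsInjective h A

section repFinset

variable {h : ℕ} {A B C : Finset ℤ} {m n K : ℤ}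

lemma mem_repFinset {S : Finset ℤ} :
    S ∈ repFinset h A n ↔ S ⊆ A ∧ S.card = h ∧ ∑ a ∈ S, a = n := by
  simp [repFinset, mem_powersetCard, and_assoc]

lemma repFinset_mono (hAB : A ⊆ B) : repFinset h A n ⊆ repFinset h B n := fun S hS => by
  rw [mem_repFinset] at hS ⊢
  exact ⟨hS.1.trans hAB, hS.2⟩

lemma repFinset_eq_empty_of_lt_abs (hK : ∀ a ∈ A, |a| ≤ K) (hm : h * K < |m|) :
    repFinset h A m = ∅ := by
  refine eq_empty_of_forall_notMem fun S hS => ?_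
  obtain ⟨hSA, hSh, rfl⟩ := mem_repFinset.1 hS
  have := abs_sum_le_card_mul fun a ha => hK a (hSA ha)
  rw [hSh] at this
  omega

lemma card_repFinset_union :
    (repFinset h (A ∪ C) m).card = (repFinset h A m).card + (newRepFinset h A C m).card := by
  have : (repFinset h (A ∪ C) m).filter (· ⊆ A) = repFinset h A m := by
    ext S
    simp only [mem_filter, mem_repFinset]
    exact ⟨fun ⟨⟨_, hSh, hSm⟩, hSA⟩ => ⟨hSA, hSh, hSm⟩,
      fun ⟨hSA, hSh, hSm⟩ => ⟨⟨hSA.trans subset_union_left, hSh, hSm⟩, hSA⟩⟩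
  rw [← this, newRepFinset, card_filter_add_card_filter_not]

end repFinset

lemma isAdmissible_empty {h : ℕ} (hh : h ≠ 0) (f : ℤ → ℕ∞) : IsAdmissible h f ∅ where
  card_repFinset_le m := by
    have : powersetCard h (∅ : Finset ℤ) = ∅ := powersetCard_eq_empty.2 (Nat.pos_of_ne_zero hh)
    simp [repFinset, this]
  smallSubsetSumsInjective S hS S' hS' _ _ _ := by
    rw [subset_empty.1 hS, subset_empty.1 hS']

section union

variable {h : ℕ} {A C S S' : Finset ℤ} {m n K : ℤ}

lemma abs_sum_sdiff_le (hAK : ∀ a ∈ A, |a| ≤ K) (hK : 0 ≤ K) (hS : S ⊆ A ∪ C)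
    (hSh : S.card ≤ h) : |∑ a ∈ S \ C, a| ≤ h * K :=
  (abs_sum_le_card_mul fun a ha => hAK a (sdiff_le_iff'.2 hS ha)).trans
    (mul_le_mul_of_nonneg_right (by exact_mod_cast (card_le_card sdiff_subset).trans hSh) hK)

lemma inter_eq_or_of_sum_eq (hAK : ∀ a ∈ A, |a| ≤ K) (hK : 0 ≤ K)
    (hC : SubsetSumsSeparated (2 * h * K) C) (hS : S ⊆ A ∪ C) (hS' : S' ⊆ A ∪ C)
    (hSh : S.card ≤ h) (hS'h : S'.card ≤ h) (hsum : ∑ a ∈ S, a = ∑ a ∈ S', a) :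
    S ∩ C = S' ∩ C ∨ (S ∩ C = C ∧ S' ∩ C = ∅) ∨ (S ∩ C = ∅ ∧ S' ∩ C = C) := by
  refine hC _ inter_subset_right _ inter_subset_right ?_
  have h₁ := abs_sum_sdiff_le hAK hK hS hSh
  have h₂ := abs_sum_sdiff_le hAK hK hS' hS'h
  rw [← sum_inter_add_sum_sdiff S C, ← sum_inter_add_sum_sdiff S' C] at hsum
  rw [abs_le] at h₁ h₂ ⊢
  constructor <;> linarith

lemma eq_of_inter_eq (hA : SmallSubsetSumsInjective h A) (hS : S ⊆ A ∪ C) (hS' : S' ⊆ A ∪ C)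
    (hinter : S ∩ C = S' ∩ C) (hcard : S.card = S'.card) (hlt : (S \ C).card < h)
    (hsum : ∑ a ∈ S, a = ∑ a ∈ S', a) : S = S' := by
  have hcard' : (S \ C).card = (S' \ C).card := by
    have := card_sdiff_add_card_inter S C
    have := card_sdiff_add_card_inter S' C
    rw [hinter] at *
    omega
  rw [← sum_inter_add_sum_sdiff S C, ← sum_inter_add_sum_sdiff S' C, hinter,
    add_right_inj] at hsum
  rw [← sdiff_union_inter S C, ← sdiff_union_inter S' C, hinter,
    hA _ (sdiff_le_iff'.2 hS) _ (sdiff_le_iff'.2 hS') hcard' hlt hsum]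

lemma eq_of_inter_eq_self (hCh : C.card = h) (hSh : S.card = h) (hSC : S ∩ C = C) : S = C :=
  (eq_of_subset_of_card_le (inter_eq_right.1 hSC) (by omega)).symm

lemma subset_of_inter_eq_empty (hS : S ⊆ A ∪ C) (hSC : S ∩ C = ∅) : S ⊆ A :=
  (disjoint_iff_inter_eq_empty.2 hSC).left_le_of_le_sup_right hS

lemma SmallSubsetSumsInjective.union (hA : SmallSubsetSumsInjective h A)
    (hAK : ∀ a ∈ A, |a| ≤ K) (hK : 0 ≤ K) (hC : SubsetSumsSeparated (2 * h * K) C)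
    (hCh : C.card = h) : SmallSubsetSumsInjective h (A ∪ C) := by
  intro S hS S' hS' hcard hlt hsum
  have hC_not_sub : ∀ {T : Finset ℤ}, T.card < h → T ∩ C ≠ C := fun hT hTC => by
    have := card_le_card (inter_eq_right.1 hTC)
    omega
  rcases inter_eq_or_of_sum_eq hAK hK hC hS hS' hlt.le (hcard ▸ hlt.le) hsum with
    hinter | ⟨hSC, -⟩ | ⟨-, hS'C⟩
  · exact eq_of_inter_eq hA hS hS' hinter hcard ((card_le_card sdiff_subset).trans_lt hlt) hsum
  · exact absurd hSC (hC_not_sub hlt)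
  · exact absurd hS'C (hC_not_sub (hcard ▸ hlt))

lemma eq_of_mem_newRepFinset (hAK : ∀ a ∈ A, |a| ≤ K) (hK : 0 ≤ K)
    (hC : SubsetSumsSeparated (2 * h * K) C) (hCh : C.card = h) (hCn : ∑ c ∈ C, c = n)
    (hS : S ∈ newRepFinset h A C n) : S = C := by
  obtain ⟨hSrep, hSA⟩ := mem_filter.1 hS
  obtain ⟨hSAC, hSh, hSn⟩ := mem_repFinset.1 hSrep
  rcases inter_eq_or_of_sum_eq hAK hK hC hSAC subset_union_right hSh.le hCh.le
    (hSn.trans hCn.symm) with hSC | ⟨hSC, -⟩ | ⟨hSC, -⟩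
  · exact eq_of_inter_eq_self hCh hSh (hSC.trans (inter_self C))
  · exact eq_of_inter_eq_self hCh hSh hSC
  · exact absurd (subset_of_inter_eq_empty hSAC hSC) hSA

lemma lt_abs_of_mem_newRepFinset (hAK : ∀ a ∈ A, |a| ≤ K) (hK : 0 ≤ K)
    (hC : SubsetSumsSeparated (2 * h * K) C) (hCh : C.card = h) (hCn : ∑ c ∈ C, c = n)
    (hmn : m ≠ n) (hS : S ∈ newRepFinset h A C m) : h * K < |m| := by
  obtain ⟨hSrep, hSA⟩ := mem_filter.1 hS
  obtain ⟨hSAC, hSh, rfl⟩ := mem_repFinset.1 hSrep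
  have hbig : 2 * h * K < |∑ a ∈ S ∩ C, a| := by
    by_contra! hsmall
    rw [← sub_zero (∑ a ∈ S ∩ C, a), ← sum_empty (f := fun a : ℤ => a)] at hsmall
    rcases hC _ inter_subset_right ∅ (empty_subset _) hsmall with hSC | ⟨hSC, -⟩ | ⟨hSC, -⟩
    · exact hSA (subset_of_inter_eq_empty hSAC hSC)
    · exact hmn (by rw [eq_of_inter_eq_self hCh hSh hSC, hCn])
    · exact hSA (subset_of_inter_eq_empty hSAC hSC)
  have hrest := abs_sum_sdiff_le hAK hK hSAC hSh.le
  rw [← sum_inter_add_sum_sdiff S C]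
  have := abs_add_le (∑ a ∈ S ∩ C, a + ∑ a ∈ S \ C, a) (-∑ a ∈ S \ C, a)
  rw [add_neg_cancel_right, abs_neg] at this
  linarith

lemma card_newRepFinset_le_one (hA : SmallSubsetSumsInjective h A) (hAK : ∀ a ∈ A, |a| ≤ K)
    (hK : 0 ≤ K) (hC : SubsetSumsSeparated (2 * h * K) C) (hCh : C.card = h)
    (hCn : ∑ c ∈ C, c = n) (hmn : m ≠ n) : (newRepFinset h A C m).card ≤ 1 := by
  refine card_le_one.2 fun S hS S' hS' => ?_
  obtain ⟨hSrep, hSA⟩ := mem_filter.1 hS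
  obtain ⟨hSAC, hSh, hSm⟩ := mem_repFinset.1 hSrep
  obtain ⟨hSAC', hSh', hSm'⟩ := mem_repFinset.1 (mem_filter.1 hS').1
  have hne : ∀ {T : Finset ℤ}, T.card = h → ∑ a ∈ T, a = m → T ∩ C ≠ C := fun hT hTm hTC => by
    rw [eq_of_inter_eq_self hCh hT hTC, hCn] at hTm
    exact hmn hTm.symm
  rcases inter_eq_or_of_sum_eq hAK hK hC hSAC hSAC' hSh.le hSh'.le (hSm.trans hSm'.symm) with
    hinter | ⟨hSC, -⟩ | ⟨-, hS'C⟩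
  · refine eq_of_inter_eq hA hSAC hSAC' hinter (hSh.trans hSh'.symm) ?_ (hSm.trans hSm'.symm)
    have hpos : 0 < (S ∩ C).card := by
      rw [card_pos, nonempty_iff_ne_empty]
      exact fun hSC => hSA (subset_of_inter_eq_empty hSAC hSC)
    have := card_sdiff_add_card_inter S C
    omega
  · exact absurd hSC (hne hSh hSm)
  · exact absurd hS'C (hne hSh' hSm')

theorem IsAdmissible.union {f : ℤ → ℕ∞} (hA : IsAdmissible h f A) (hAK : ∀ a ∈ A, |a| ≤ K)
    (hK : 0 ≤ K) (hfK : ∀ m, f m = 0 → |m| ≤ h * K) (hC : SubsetSumsSeparated (2 * h * K) C)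
    (hCh : C.card = h) (hCn : ∑ c ∈ C, c = n) (hCA : ¬C ⊆ A)
    (hn : ((repFinset h A n).card : ℕ∞) < f n) :
    IsAdmissible h f (A ∪ C) ∧
      (repFinset h (A ∪ C) n).card = (repFinset h A n).card + 1 := by
  have hCnew : newRepFinset h A C n = {C} := by
    refine eq_singleton_iff_unique_mem.2 ⟨mem_filter.2 ⟨mem_repFinset.2
      ⟨subset_union_right, hCh, hCn⟩, hCA⟩, fun S hS => ?_⟩
    exact eq_of_mem_newRepFinset hAK hK hC hCh hCn hS
  have hcard_n : (repFinset h (A ∪ C) n).card = (repFinset h A n).card + 1 := by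
    rw [card_repFinset_union, hCnew, card_singleton]
  refine ⟨⟨fun m => ?_, hA.smallSubsetSumsInjective.union hAK hK hC hCh⟩, hcard_n⟩
  obtain rfl | hmn := eq_or_ne m n
  · rw [hcard_n, Nat.cast_add_one]
    exact Order.add_one_le_of_lt hn
  rw [card_repFinset_union]
  obtain hnew | ⟨S, hS⟩ := (newRepFinset h A C m).eq_empty_or_nonempty
  · simpa [hnew] using hA.card_repFinset_le m
  have hm := lt_abs_of_mem_newRepFinset hAK hK hC hCh hCn hmn hS
  rw [repFinset_eq_empty_of_lt_abs hAK hm, card_empty, zero_add]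
  have hfm : f m ≠ 0 := fun hfm => (hfK m hfm).not_gt hm
  calc (((newRepFinset h A C m).card : ℕ) : ℕ∞) ≤ 1 := by
        exact_mod_cast card_newRepFinset_le_one hA.smallSubsetSumsInjective hAK hK hC hCh hCn hmn
    _ ≤ f m := Order.one_le_iff_ne_zero.2 hfm

end union

theorem IsAdmissible.exists_extension {h : ℕ} {f : ℤ → ℕ∞} {A : Finset ℤ} (hh : 2 ≤ h)
    (hf : (f ⁻¹' {0}).Finite) (hA : IsAdmissible h f A) (n : ℤ) (t : ℕ) :
    ∃ B, IsAdmissible h f B ∧ A ⊆ B ∧ B.card ≤ A.card + h ∧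
      (((repFinset h A n).card : ℕ∞) < f n →
        (repFinset h B n).card = (repFinset h A n).card + 1) ∧
      ∀ a ∈ B \ A, (t : ℤ) < |a| := by
  by_cases hn : ((repFinset h A n).card : ℕ∞) < f n
  swap
  · exact ⟨A, hA, subset_rfl, le_add_right le_rfl, fun hn' => absurd hn' hn, by simp⟩
  set K := ∑ a ∈ A ∪ hf.toFinset ∪ {n, (t : ℤ)}, |a|
  have hle : ∀ a ∈ A ∪ hf.toFinset ∪ {n, (t : ℤ)}, |a| ≤ K := fun a ha =>
    single_le_sum (f := abs) (fun b _ => abs_nonneg b) ha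
  have hK : 0 ≤ K := sum_nonneg fun b _ => abs_nonneg b
  have hhK : K ≤ h * K := le_mul_of_one_le_left hK (by norm_cast; omega)
  have hhK' : h * K ≤ 2 * h * K := by linarith
  obtain ⟨C, hCh, hCn, hCbig, hC⟩ :=
    exists_subsetSumsSeparated hh ((hle n (by simp)).trans (hhK.trans hhK'))
  have hCK : ∀ c ∈ C, K < |c| := fun c hc => (hhK.trans hhK').trans_lt (hCbig c hc)
  have hCA : ¬C ⊆ A := by
    obtain ⟨c, hc⟩ := card_pos.1 (show 0 < C.card by omega)
    exact fun hCA => (hCK c hc).not_ge (hle c (by simp [hCA hc]))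
  obtain ⟨hB, hBn⟩ := hA.union (fun a ha => hle a (by simp [ha])) hK
    (fun m hm => (hle m (by simp [hm])).trans hhK) hC hCh hCn hCA hn
  refine ⟨A ∪ C, hB, subset_union_left, hCh ▸ card_union_le A C, fun _ => hBn, fun a ha => ?_⟩
  obtain ⟨haAC, haA⟩ := mem_sdiff.1 ha
  have haC : a ∈ C := (mem_union.1 haAC).resolve_left haA
  calc (t : ℤ) ≤ |(t : ℤ)| := le_abs_self _
    _ ≤ K := hle _ (by simp)
    _ < |a| := hCK a haC

lemma exists_seq_of_forall_exists_step {α : Type*} {P : α → Prop} {R : ℕ → α → α → Prop}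
    {a₀ : α} (h₀ : P a₀) (hstep : ∀ k a, P a → ∃ b, P b ∧ R k a b) :
    ∃ x : ℕ → α, x 0 = a₀ ∧ ∀ k, P (x k) ∧ R k (x k) (x (k + 1)) := by
  choose g hgP hgR using hstep
  let y : ℕ → {a // P a} := fun k =>
    Nat.rec ⟨a₀, h₀⟩ (fun k a => ⟨g k a.1 a.2, hgP k a.1 a.2⟩) k
  exact ⟨fun k => (y k).1, rfl, fun k => ⟨(y k).2, hgR k _ _⟩⟩

lemma exists_seq_frequently_eq (α : Type*) [Denumerable α] :
    ∃ e : ℕ → α, ∀ a, ∃ᶠ k in Filter.atTop, e k = a := by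
  refine ⟨fun k => Denumerable.ofNat α k.unpair.2, fun a => Filter.frequently_atTop.2 fun k₀ =>
    ⟨Nat.pair k₀ (Encodable.encode a), Nat.left_le_pair _ _, ?_⟩⟩
  simp [Nat.unpair_pair]

lemma Set.encard_iUnion_of_monotone {α : Type*} {s : ℕ → Set α} (hs : Monotone s) :
    (⋃ k, s k).encard = ⨆ k, (s k).encard := by
  refine le_antisymm ?_ (iSup_le fun k => encard_mono (subset_iUnion s k))
  obtain htop | hlt := eq_or_ne (⨆ k, (s k).encard) ⊤
  · simp [htop]
  obtain ⟨k₀, hk₀⟩ := ENat.exists_eq_iSup_of_lt_top hlt.lt_top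
  have hfin : (s k₀).Finite := encard_ne_top_iff.1 (hk₀ ▸ hlt)
  have hstab : ⋃ k, s k = s k₀ := by
    refine (iUnion_subset fun k => ?_).antisymm (subset_iUnion s k₀)
    obtain hk | hk := le_total k k₀
    · exact hs hk
    · exact (hfin.eq_of_subset_of_encard_le (hs hk)
        ((le_iSup (fun k => (s k).encard) k).trans hk₀.ge)).symm.subset
  rw [hstab, hk₀]

lemma restRepFn_iUnion {A : ℕ → Finset ℤ} (hA : Monotone A) (h : ℕ) (n : ℤ) :
    restRepFn (⋃ k, (A k : Set ℤ)) h n = ⨆ k, ((repFinset h (A k) n).card : ℕ∞) := by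
  have hunion : {S : Finset ℤ | ↑S ⊆ ⋃ k, (A k : Set ℤ) ∧ S.card = h ∧ ∑ a ∈ S, a = n} =
      ⋃ k, (repFinset h (A k) n : Set (Finset ℤ)) := by
    ext S
    simp only [Set.mem_ofPred_eq, Set.mem_iUnion, mem_coe, mem_repFinset]
    refine ⟨fun ⟨hS, hSh, hSn⟩ => ?_, fun ⟨k, hS, hSh, hSn⟩ =>
      ⟨(coe_subset.2 hS).trans (Set.subset_iUnion (fun k => (A k : Set ℤ)) k), hSh, hSn⟩⟩
    obtain ⟨k, hk⟩ := (Monotone.directed_le fun _ _ hkl => coe_subset.2 (hA hkl)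
      ).exists_mem_subset_of_finset_subset_biUnion hS
    exact ⟨k, coe_subset.1 hk, hSh, hSn⟩
  rw [restRepFn, hunion, Set.encard_iUnion_of_monotone fun _ _ hkl => coe_subset.2
    (repFinset_mono (hA hkl))]
  simp only [Set.encard_coe_eq_coe_finsetCard]

lemma iSup_natCast_eq_of_frequently_lt_succ {c : ℕ → ℕ} {v : ℕ∞} (hc : Monotone c)
    (hle : ∀ k, (c k : ℕ∞) ≤ v)
    (hinc : ∃ᶠ k in Filter.atTop, (c k : ℕ∞) < v → c k < c (k + 1)) :
    ⨆ k, (c k : ℕ∞) = v := by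
  refine le_antisymm (iSup_le hle) (not_lt.1 fun hlt => ?_)
  obtain ⟨k₀, hk₀⟩ := ENat.exists_eq_iSup_of_lt_top (hlt.trans_le le_top)
  obtain ⟨k, hk, hinc⟩ := Filter.frequently_atTop.1 hinc k₀
  have hsucc : (c (k + 1) : ℕ∞) ≤ c k₀ := (le_iSup (fun k => (c k : ℕ∞)) (k + 1)).trans hk₀.ge
  have := hinc ((le_iSup (fun k => (c k : ℕ∞)) k).trans_lt hlt)
  have := hc hk
  norm_cast at hsucc
  omega

lemma mem_of_mem_of_abs_le {A : ℕ → Finset ℤ} {T : ℕ → ℕ} (hA0 : A 0 = ∅)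
    (hA : Monotone A) (hT : Monotone T) (hnew : ∀ k, ∀ a ∈ A (k + 1) \ A k, (T k : ℤ) < |a|)
    {k l : ℕ} {a : ℤ} (hal : a ∈ A l) (hak : |a| ≤ T k) : a ∈ A k := by
  induction l with
  | zero => simp [hA0] at hal
  | succ l ih =>
    by_cases hal' : a ∈ A l
    · exact ih hal'
    have hlt := hnew l a (mem_sdiff.2 ⟨hal, hal'⟩)
    have hlk : l + 1 ≤ k := by
      by_contra! hkl
      have : T k ≤ T l := hT (by omega)
      omega
    exact hA hlk hal

lemma finite_and_ncard_le_of_lt_abs_of_mem_sdiff {A : ℕ → Finset ℤ} {T : ℕ → ℕ} {φ : ℕ → ℝ}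
    (hA0 : A 0 = ∅) (hA : Monotone A) (hT : StrictMono T)
    (hnew : ∀ k, ∀ a ∈ A (k + 1) \ A k, (T k : ℤ) < |a|)
    (hTφ : ∀ k, ∀ x ≥ T k, ((A (k + 1)).card : ℝ) ≤ φ x) (hφ0 : ∀ x, 0 ≤ φ x) (x : ℕ) :
    {a ∈ ⋃ k, (A k : Set ℤ) | |a| ≤ (x : ℤ)}.Finite ∧
      (({a ∈ ⋃ k, (A k : Set ℤ) | |a| ≤ (x : ℤ)}.ncard : ℝ) ≤ φ x) := by
  obtain ⟨k, hsub, hk⟩ : ∃ k, {a ∈ ⋃ k, (A k : Set ℤ) | |a| ≤ (x : ℤ)} ⊆ A k ∧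
      ((A k).card : ℝ) ≤ φ x := by
    have hsub : ∀ k, x ≤ T k → {a ∈ ⋃ k, (A k : Set ℤ) | |a| ≤ (x : ℤ)} ⊆ A k :=
      fun k hxk a ⟨ha, hax⟩ => by
        obtain ⟨l, hal⟩ := Set.mem_iUnion.1 ha
        exact mem_of_mem_of_abs_le hA0 hA hT.monotone hnew hal (hax.trans (by exact_mod_cast hxk))
    rcases le_or_gt x (T 0) with hx | hx
    · exact ⟨0, hsub 0 hx, by simp [hA0, hφ0 x]⟩
    · obtain ⟨k, hkx, hxk⟩ := hT.exists_between_of_tendsto_atTop hT.tendsto_atTop hx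
      exact ⟨k + 1, hsub (k + 1) hxk, hTφ k x hkx.le⟩
  refine ⟨(A k).finite_toSet.subset hsub, le_trans ?_ hk⟩
  exact_mod_cast (Set.ncard_le_ncard hsub (A k).finite_toSet).trans (Set.ncard_coe_finset _).le

theorem exists_sparse_restRepFn_eq {h : ℕ} (hh : 2 ≤ h) {f : ℤ → ℕ∞} (hf : (f ⁻¹' {0}).Finite)
    {φ : ℕ → ℝ} (hφ0 : ∀ x, 0 ≤ φ x) (hφ : Filter.Tendsto φ Filter.atTop Filter.atTop)
    (p : ℕ) :
    ∃ A : Set ℤ, (∀ n, restRepFn A h n = f n) ∧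
      (∀ x : ℕ, {a ∈ A | |a| ≤ (x : ℤ)}.Finite ∧ (({a ∈ A | |a| ≤ (x : ℤ)}.ncard : ℝ) ≤ φ x)) ∧
      ∀ a ∈ A, (p : ℤ) < |a| := by
  obtain ⟨e, he⟩ := exists_seq_frequently_eq ℤ
  obtain ⟨T, hT, hTφ⟩ : ∃ T : ℕ → ℕ, StrictMono T ∧
      ∀ k, p ≤ T k ∧ ∀ x ≥ T k, ((h * (k + 1) : ℕ) : ℝ) ≤ φ x :=
    Filter.extraction_forall_of_eventually fun k => (Filter.eventually_ge_atTop p).and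
      (Filter.eventually_forall_ge_atTop.2 (hφ.eventually_ge_atTop _))
  obtain ⟨A, hA0, hA⟩ := exists_seq_of_forall_exists_step (isAdmissible_empty (by omega) f)
    fun k A hA => hA.exists_extension hh hf (e k) (T k)
  have hmono : Monotone A := monotone_nat_of_le_succ fun k => (hA k).2.1
  have hcard : ∀ k, (A k).card ≤ h * k := by
    intro k
    induction k with
    | zero => simp [hA0]
    | succ k ih => linarith [(hA k).2.2.1]
  have hnew : ∀ k, ∀ a ∈ A (k + 1) \ A k, (T k : ℤ) < |a| := fun k => (hA k).2.2.2.2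
  refine ⟨⋃ k, (A k : Set ℤ), fun n => ?_, finite_and_ncard_le_of_lt_abs_of_mem_sdiff hA0 hmono hT
    hnew (fun k x hx => (Nat.cast_le.2 (hcard (k + 1))).trans ((hTφ k).2 x hx)) hφ0, fun a ha => ?_⟩
  · rw [restRepFn_iUnion hmono]
    refine iSup_natCast_eq_of_frequently_lt_succ
      (fun k l hkl => card_le_card (repFinset_mono (hmono hkl)))
      (fun k => (hA k).1.card_repFinset_le n) ((he n).mono fun k hk hlt => ?_)
    subst hk
    rw [(hA k).2.2.2.1 hlt]
    exact Nat.lt_succ_self _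
  · obtain ⟨l, hal⟩ := Set.mem_iUnion.1 ha
    have : ((T 0 : ℕ) : ℤ) < |a| := not_le.1 fun ha0 => by
      simpa [hA0] using mem_of_mem_of_abs_le hA0 hmono hT.monotone hnew hal ha0
    exact lt_of_le_of_lt (by exact_mod_cast (hTφ 0).1) this

lemma nonempty_of_restRepFn_ne_zero {A : Set ℤ} {h : ℕ} {n : ℤ} (hh : h ≠ 0)
    (hA : restRepFn A h n ≠ 0) : A.Nonempty := by
  obtain ⟨S, hSA, hSh, -⟩ := Set.nonempty_of_encard_ne_zero hA
  obtain ⟨a, ha⟩ := card_ne_zero.1 (hSh ▸ hh)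
  exact ⟨a, hSA ha⟩

lemma Set.infinite_of_forall_exists_nonempty_abs_gt {𝒜 : Set (Set ℤ)}
    (h𝒜 : ∀ p : ℕ, ∃ A ∈ 𝒜, A.Nonempty ∧ ∀ a ∈ A, (p : ℤ) < |a|) : 𝒜.Infinite := by
  refine Set.Infinite.of_image (fun A => sInf (Int.natAbs '' A)) (Set.infinite_of_forall_exists_gt
    fun p => ?_)
  obtain ⟨A, hA, hne, hp⟩ := h𝒜 p
  obtain ⟨a, ha, hmin⟩ := Nat.sInf_mem (hne.image Int.natAbs)
  refine ⟨_, ⟨A, hA, rfl⟩, ?_⟩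
  have := hp a ha
  rw [← Int.natCast_natAbs] at this
  change p < sInf (Int.natAbs '' A)
  rw [← hmin]
  omega

/-- Theorem 2: for `h ≥ 2`, `f : ℤ → ℕ∞` with `f⁻¹(0)` finite and nonnegative
`φ : ℕ → ℝ` with `φ(x) → ∞`, there are infinitely many sets `A ⊆ ℤ` with
restricted representation function `r̂_{A,h} = f` and `A(−x,x) ≤ φ(x)`. -/
theorem infinitely_many_sparse_restricted_bases (h : ℕ) (hh : 2 ≤ h)
    (f : ℤ → ℕ∞) (hf : (f ⁻¹' {0}).Finite)
    (φ : ℕ → ℝ) (hφ0 : ∀ x, 0 ≤ φ x)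
    (hφ : Filter.Tendsto φ Filter.atTop Filter.atTop) :
    {A : Set ℤ |
      (∀ n : ℤ, restRepFn A h n = f n) ∧
      (∀ x : ℕ, {a ∈ A | |a| ≤ (x : ℤ)}.Finite ∧
        (({a ∈ A | |a| ≤ (x : ℤ)}.ncard : ℝ) ≤ φ x))}.Infinite := by
  refine Set.infinite_of_forall_exists_nonempty_abs_gt fun p => ?_
  obtain ⟨A, hrep, hsparse, hp⟩ := exists_sparse_restRepFn_eq hh hf hφ0 hφ p
  obtain ⟨n, hn⟩ := hf.infinite_compl.nonempty
  exact ⟨A, ⟨hrep, hsparse⟩, nonempty_of_restRepFn_ne_zero (by omega) ((hrep n).trans_ne hn), hp⟩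
end

section
/- Let A be a set of integers, h ≥ 2, and suppose A is a Sidon set of order h−1, |a| ≤ d for all a ∈ A, and c > 2hd. Then A ∪ {−c, (h−1)c + u} is a Sidon set of order h−1 for any integer u with |u| ≤ d. -/
/-- The representation function of order `h` of `A ⊆ ℤ`. -/
noncomputable def repFn (A : Set ℤ) (h : ℕ) (n : ℤ) : ℕ∞ :=
  {g : Fin h → ℤ | Monotone g ∧ (∀ i, g i ∈ A) ∧ ∑ i, g i = n}.encard

/-!
Write `m = h - 1`. A multiset of `m` elements of `A ∪ {-c, m c + u}` with `p` copies of `-c`,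
`q` copies of `m c + u` and the rest `R ⊆ A` has sum `(q m - p) c + r` with
`r = q u + ∑ R`, `|r| ≤ m d < c / 2`. So the sum determines `k = q m - p` and `r`.
Writing `k = q (m + 1) - (p + q)` with `0 ≤ p + q ≤ m` shows that `k` determines `q` and `p`,
hence also `|R|` and `∑ R`; padding `R` up to `m` elements with a fixed element of `R`,
the Sidon property of `A` then determines `R`.
-/

open Multiset

section MonotoneTuples

variable {α : Type*} [LinearOrder α]

theorem exists_monotone_coe_ofFn_eq {n : ℕ} {M : Multiset α} (hM : card M = n) :
    ∃ g : Fin n → α, Monotone g ∧ (List.ofFn g : Multiset α) = M := by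
  have hlen : (M.sort (· ≤ ·)).length = n := by rw [length_sort, hM]
  subst hlen
  refine ⟨(M.sort (· ≤ ·)).get, fun i j hij => (pairwise_sort M _).rel_get_of_le hij, ?_⟩
  rw [List.ofFn_get, sort_eq]

theorem eq_of_monotone_of_coe_ofFn_eq {n : ℕ} {g₁ g₂ : Fin n → α} (hg₁ : Monotone g₁)
    (hg₂ : Monotone g₂) (h : (List.ofFn g₁ : Multiset α) = List.ofFn g₂) : g₁ = g₂ :=
  List.ofFn_injective <| (Multiset.coe_eq_coe.mp h).eq_of_pairwise'
    (List.pairwise_ofFn.mpr fun _ _ hij => hg₁ hij.le)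
    (List.pairwise_ofFn.mpr fun _ _ hij => hg₂ hij.le)

end MonotoneTuples

def multisetsOfCard {α : Type*} (A : Set α) (m : ℕ) : Set (Multiset α) :=
  {M | card M = m ∧ ∀ x ∈ M, x ∈ A}

theorem repFn_le_one_iff {A : Set ℤ} {m : ℕ} :
    (∀ n, repFn A m n ≤ 1) ↔ Set.InjOn Multiset.sum (multisetsOfCard A m) := by
  simp only [repFn, Set.encard_le_one_iff]
  constructor
  · rintro hA M₁ ⟨hcard₁, hM₁⟩ M₂ ⟨hcard₂, hM₂⟩ hs
    obtain ⟨g₁, hg₁, rfl⟩ := exists_monotone_coe_ofFn_eq hcard₁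
    obtain ⟨g₂, hg₂, rfl⟩ := exists_monotone_coe_ofFn_eq hcard₂
    simp only [sum_coe, List.sum_ofFn, mem_coe, List.mem_ofFn, forall_exists_index,
      forall_apply_eq_imp_iff] at hs hM₁ hM₂
    rw [hA _ g₁ g₂ ⟨hg₁, hM₁, rfl⟩ ⟨hg₂, hM₂, hs.symm⟩]
  · rintro hA n g₁ g₂ ⟨hg₁, hA₁, hs₁⟩ ⟨hg₂, hA₂, hs₂⟩
    refine eq_of_monotone_of_coe_ofFn_eq hg₁ hg₂ (hA ?_ ?_ ?_) <;>
      simp_all [multisetsOfCard, List.sum_ofFn]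

theorem Set.InjOn.sum_multisetsOfCard_of_le {α : Type*} [AddCancelCommMonoid α] {A : Set α}
    {m k : ℕ} (hA : Set.InjOn Multiset.sum (multisetsOfCard A m)) (hk : k ≤ m) :
    Set.InjOn Multiset.sum (multisetsOfCard A k) := by
  rintro R₁ ⟨hcard₁, hR₁⟩ R₂ ⟨hcard₂, hR₂⟩ hs
  rcases R₁.empty_or_exists_mem with rfl | ⟨a, ha⟩
  · exact (card_eq_zero.mp (hcard₂.trans hcard₁.symm)).symm
  have hpad : ∀ R ∈ multisetsOfCard A k, R + replicate (m - k) a ∈ multisetsOfCard A m := by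
    rintro R ⟨hcard, hR⟩
    refine ⟨by simp only [card_add, card_replicate]; omega, fun x hx => ?_⟩
    rcases Multiset.mem_add.mp hx with hx | hx
    · exact hR x hx
    · exact eq_of_mem_replicate hx ▸ hR₁ a ha
  exact add_right_cancel (hA (hpad R₁ ⟨hcard₁, hR₁⟩) (hpad R₂ ⟨hcard₂, hR₂⟩) (by simp [hs]))

theorem Multiset.exists_eq_replicate_add_replicate_add {α : Type*} {A : Set α} {x y : α}
    (M : Multiset α) (hM : ∀ z ∈ M, z ∈ A ∪ {x, y}) :
    ∃ p q : ℕ, ∃ R : Multiset α, (∀ z ∈ R, z ∈ A) ∧ M = replicate p x + replicate q y + R := by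
  induction M using Multiset.induction_on with
  | empty => exact ⟨0, 0, 0, by simp, by simp⟩
  | cons a M ih =>
    obtain ⟨p, q, R, hR, rfl⟩ := ih fun z hz => hM z (mem_cons_of_mem hz)
    rcases hM a (mem_cons_self a _) with ha | ha | ha
    · exact ⟨p, q, a ::ₘ R, forall_mem_cons.mpr ⟨ha, hR⟩, by simp⟩
    · subst ha
      exact ⟨p + 1, q, R, hR, by simp [replicate_succ]⟩
    · rw [Set.mem_singleton_iff] at ha
      subst ha
      exact ⟨p, q + 1, R, hR, by rw [replicate_succ]; simp [add_comm]⟩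

theorem Multiset.abs_sum_le_card_nsmul {G : Type*} [AddCommGroup G] [LinearOrder G]
    [IsOrderedAddMonoid G] {R : Multiset G} {d : G} (h : ∀ x ∈ R, |x| ≤ d) :
    |R.sum| ≤ card R • d :=
  abs_sum_le_sum_abs.trans <| by
    simpa using sum_le_card_nsmul (R.map abs) d (by simpa using h)

theorem Int.eq_and_eq_of_mul_add_eq_mul_add {c k₁ k₂ r₁ r₂ : ℤ} (h : k₁ * c + r₁ = k₂ * c + r₂)
    (hr : |r₁ - r₂| < c) : k₁ = k₂ ∧ r₁ = r₂ := by
  have hr₁₂ : r₁ = r₂ :=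
    sub_eq_zero.mp <| Int.eq_zero_of_abs_lt_dvd ⟨k₂ - k₁, by linarith⟩ hr
  have hc : c ≠ 0 := (lt_of_le_of_lt (abs_nonneg _) hr).ne'
  exact ⟨mul_right_cancel₀ hc (by linarith), hr₁₂⟩

theorem eq_of_sum_replicate_add_replicate_add_eq {m : ℕ} {d c u : ℤ} (hu : |u| ≤ d)
    (hc : 2 * m * d < c) {p₁ q₁ p₂ q₂ : ℕ} {R₁ R₂ : Multiset ℤ}
    (hR₁ : ∀ x ∈ R₁, |x| ≤ d) (hR₂ : ∀ x ∈ R₂, |x| ≤ d)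
    (hm₁ : p₁ + q₁ + card R₁ = m) (hm₂ : p₂ + q₂ + card R₂ = m)
    (hs : (replicate p₁ (-c) + replicate q₁ (m * c + u) + R₁).sum =
      (replicate p₂ (-c) + replicate q₂ (m * c + u) + R₂).sum) :
    p₁ = p₂ ∧ q₁ = q₂ ∧ R₁.sum = R₂.sum := by
  have hsum : ∀ (p q : ℕ) (R : Multiset ℤ), (replicate p (-c) + replicate q (m * c + u) + R).sum
      = (q * m - p) * c + (replicate q u + R).sum := by
    intro p q R
    simp only [sum_add, sum_replicate, nsmul_eq_mul]
    ring
  have hbound : ∀ (q : ℕ) (R : Multiset ℤ), (∀ x ∈ R, |x| ≤ d) → q + card R ≤ m →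
      |(replicate q u + R).sum| ≤ m * d := by
    intro q R hR hqR
    have hd : 0 ≤ d := (abs_nonneg u).trans hu
    calc |(replicate q u + R).sum| ≤ ((q + card R : ℕ) : ℤ) * d := by
          simpa using abs_sum_le_card_nsmul (R := replicate q u + R) fun x hx =>
            (mem_add.mp hx).elim (fun hx => eq_of_mem_replicate hx ▸ hu) (hR x)
      _ ≤ m * d := by gcongr
  rw [hsum, hsum] at hs
  obtain ⟨hk, hr⟩ := Int.eq_and_eq_of_mul_add_eq_mul_add hs <| by
    have h₁ := abs_le.mp (hbound q₁ R₁ hR₁ (by omega))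
    have h₂ := abs_le.mp (hbound q₂ R₂ hR₂ (by omega))
    rw [abs_lt]
    constructor <;> linarith
  -- `q m - p = q (m + 1) - (p + q)` with `0 ≤ p + q ≤ m` is division with remainder by `m + 1`.
  obtain ⟨hq, hpq⟩ := Int.eq_and_eq_of_mul_add_eq_mul_add
    (c := m + 1) (k₁ := q₁) (k₂ := q₂) (r₁ := -(p₁ + q₁ : ℤ)) (r₂ := -(p₂ + q₂ : ℤ))
    (by linarith) <| by
      rw [abs_lt]
      constructor <;> omega
  have hq : q₁ = q₂ := by exact_mod_cast hq
  subst hq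
  refine ⟨by omega, rfl, ?_⟩
  simpa using hr

theorem injOn_sum_union_neg_mul_add {A : Set ℤ} {m : ℕ} {d c u : ℤ} (hd : ∀ a ∈ A, |a| ≤ d)
    (hu : |u| ≤ d) (hc : 2 * m * d < c) (hA : Set.InjOn Multiset.sum (multisetsOfCard A m)) :
    Set.InjOn Multiset.sum (multisetsOfCard (A ∪ {-c, m * c + u}) m) := by
  rintro M₁ ⟨hcard₁, hM₁⟩ M₂ ⟨hcard₂, hM₂⟩ hs
  obtain ⟨p₁, q₁, R₁, hR₁, rfl⟩ := exists_eq_replicate_add_replicate_add M₁ hM₁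
  obtain ⟨p₂, q₂, R₂, hR₂, rfl⟩ := exists_eq_replicate_add_replicate_add M₂ hM₂
  simp only [card_add, card_replicate] at hcard₁ hcard₂
  obtain ⟨rfl, rfl, hRs⟩ := eq_of_sum_replicate_add_replicate_add_eq hu hc
    (fun x hx => hd x (hR₁ x hx)) (fun x hx => hd x (hR₂ x hx)) hcard₁ hcard₂ hs
  rw [hA.sum_multisetsOfCard_of_le (k := card R₁) (by omega) ⟨rfl, hR₁⟩ ⟨by omega, hR₂⟩ hRs]

theorem sidon_extension_general (A : Set ℤ) (h : ℕ) (hh : 2 ≤ h)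
    (d c u : ℤ) (hd : ∀ a ∈ A, |a| ≤ d) (hu : |u| ≤ d) (hc : 2 * h * d < c)
    (hSidon : ∀ n : ℤ, repFn A (h - 1) n ≤ 1) :
    ∀ n : ℤ, repFn (A ∪ {-c, (h - 1 : ℤ) * c + u}) (h - 1) n ≤ 1 := by
  have hm : ((h - 1 : ℕ) : ℤ) = h - 1 := by omega
  have hd₀ : 0 ≤ d := (abs_nonneg u).trans hu
  rw [repFn_le_one_iff] at hSidon ⊢
  rw [← hm]
  exact injOn_sum_union_neg_mul_add hd hu (by rw [hm]; nlinarith) hSidon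

/-- If `A` is a Sidon set of order `h−1` with `|a| ≤ d` on `A`, `|u| ≤ d` and
`c > 2hd`, then `A ∪ {−c, (h−1)c + u}` is a Sidon set of order `h−1`. -/
theorem sidon_extension (A : Set ℤ) (hA : A.Finite) (h : ℕ) (hh : 2 ≤ h)
    (d c u : ℤ) (hd : ∀ a ∈ A, |a| ≤ d) (hu : |u| ≤ d) (hc : 2 * h * d < c)
    (hSidon : ∀ n : ℤ, repFn A (h - 1) n ≤ 1) :
    ∀ n : ℤ, repFn (A ∪ {-c, (h - 1 : ℤ) * c + u}) (h - 1) n ≤ 1 :=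
  sidon_extension_general A h hh d c u hd hu hc hSidon
end

section
/- For h ≥ 2, there exist infinitely many sets A ⊆ ℤ such that r_{A,h}(n) = 1 for every integer n, i.e., every integer has exactly one representation as a nondecreasing sum of h elements of A (A is a 'unique representation basis' of order h for ℤ). -/
/-!
Enumerate `ℤ` as `n₀, n₁, …` and grow a finite `B_h`-set `F` greedily: if `nₜ` is not yet a sum
of `h` elements of `F`, add a huge `x` together with `y = nₜ - (h - 1) x`. Sums over the enlarged
set are `c x + r` with `r` small compared to `x`, which keeps `F` a `B_h`-set, and
`(h - 1) x + y = nₜ`. The union `A` of the chain is a `B_h`-set representing every integer, so every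
integer has exactly one representation. The translates `A - k` are unique representation bases too,
and they are pairwise distinct: `a - d, a, a + d ∈ A` with `d ≠ 0` would give `h a` a second
representation.
-/

open Multiset

section Monotone

variable {α : Type*} [LinearOrder α] {h : ℕ}

theorem injOn_ofFn_monotone :
    Set.InjOn (fun g : Fin h → α => (List.ofFn g : Multiset α)) {g | Monotone g} :=
  fun _ hg _ hg' hgg' => List.ofFn_injective <|
    (Multiset.coe_eq_coe.1 hgg').eq_of_sortedLE hg.sortedLE_ofFn hg'.sortedLE_ofFn

theorem exists_monotone_ofFn_eq {s : Multiset α} (hs : card s = h) :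
    ∃ g : Fin h → α, Monotone g ∧ (List.ofFn g : Multiset α) = s := by
  have hlen : (s.sort).length = h := by rw [length_sort, hs]
  refine ⟨fun i => (s.sort).get (i.cast hlen.symm), fun i j hij => ?_, ?_⟩
  · exact (List.sortedLE_iff_monotone_get.1 (pairwise_sort s _).sortedLE) hij
  · rw [← List.ofFn_congr hlen, List.ofFn_get, sort_eq]

end Monotone

def repMultisets {α : Type*} [AddCommMonoid α] (A : Set α) (h : ℕ) (n : α) :
    Set (Multiset α) :=
  {s | card s = h ∧ (∀ a ∈ s, a ∈ A) ∧ s.sum = n}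

theorem repFn_eq_encard_repMultisets (A : Set ℤ) (h : ℕ) (n : ℤ) :
    repFn A h n = (repMultisets A h n).encard := by
  rw [repFn, ← injOn_ofFn_monotone.mono (fun g hg => hg.1) |>.encard_image]
  congr 1
  ext s
  constructor
  · rintro ⟨g, ⟨hg, hgA, hgn⟩, rfl⟩
    exact ⟨by simp, by simpa using hgA, by simpa [List.sum_ofFn] using hgn⟩
  · rintro ⟨hs, hsA, hsn⟩
    obtain ⟨g, hg, rfl⟩ := exists_monotone_ofFn_eq hs
    exact ⟨g, ⟨hg, fun i => hsA _ (by simp), by simpa [List.sum_ofFn] using hsn⟩, rfl⟩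

section BhSet

variable {α : Type*} [AddCommMonoid α] {h : ℕ}

/-- For nonempty `A` this is equivalent to the usual condition on sums of exactly `h` elements
(pad both multisets with copies of one element). -/
def IsBhSet (h : ℕ) (A : Set α) : Prop :=
  ∀ ⦃s t : Multiset α⦄, card s ≤ h → card t = card s → (∀ a ∈ s, a ∈ A) → (∀ a ∈ t, a ∈ A) →
    s.sum = t.sum → s = t

theorem isBhSet_empty : IsBhSet h (∅ : Set α) := by
  intro s t _ _ hs ht _
  rw [eq_zero_of_forall_notMem hs, eq_zero_of_forall_notMem ht]

theorem IsBhSet.subsingleton_repMultisets {A : Set α} (hA : IsBhSet h A) (n : α) :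
    (repMultisets A h n).Subsingleton :=
  fun _ ⟨hs, hsA, hsn⟩ _ ⟨ht, htA, htn⟩ =>
    hA hs.le (ht.trans hs.symm) hsA htA (hsn.trans htn.symm)

theorem isBhSet_iUnion {ι : Type*} [Nonempty ι] {F : ι → Set α} (hdir : Directed (· ⊆ ·) F)
    (hF : ∀ i, IsBhSet h (F i)) : IsBhSet h (⋃ i, F i) := by
  classical
  intro s t hs ht hsF htF hst
  obtain ⟨i, hi⟩ := hdir.exists_mem_subset_of_finset_subset_biUnion (s := (s + t).toFinset) <| by
    intro a ha
    rcases mem_add.1 (mem_toFinset.1 ha) with ha | ha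
    exacts [hsF a ha, htF a ha]
  exact hF i hs ht (fun a ha => hi (by simp [ha])) (fun a ha => hi (by simp [ha])) hst

end BhSet

theorem Multiset.exists_eq_replicate_add_replicate_add_s15 {α : Type*} {x y : α} {B : Set α}
    {s : Multiset α} (hs : ∀ a ∈ s, a ∈ insert x (insert y B)) :
    ∃ j k s₀, s = replicate j x + replicate k y + s₀ ∧ ∀ a ∈ s₀, a ∈ B := by
  classical
  refine ⟨count x s, count y (s.filter (· ≠ x)), (s.filter (· ≠ x)).filter (· ≠ y), ?_, ?_⟩
  · rw [← filter_eq', ← filter_eq', add_assoc, filter_add_not, filter_add_not]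
  · intro a ha
    simp only [mem_filter] at ha
    simpa [ha.1.2, ha.2] using hs a ha.1.1

theorem Multiset.abs_sum_le_card_nsmul_s15 {α : Type*} [AddCommGroup α] [LinearOrder α]
    [IsOrderedAddMonoid α] {s : Multiset α} {M : α} (hs : ∀ a ∈ s, |a| ≤ M) :
    |s.sum| ≤ card s • M := by
  rw [abs_le, ← neg_nsmul]
  exact ⟨card_nsmul_le_sum fun a ha => neg_le_of_abs_le (hs a ha),
    sum_le_card_nsmul s M fun a ha => le_of_abs_le (hs a ha)⟩

theorem Int.eq_and_eq_of_mul_add_eq_mul_add_s15 {x c c' r r' : ℤ} (hr : |r' - r| < x)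
    (h : c * x + r = c' * x + r') : c = c' ∧ r = r' := by
  have hrr : r' - r = 0 := Int.eq_zero_of_abs_lt_dvd ⟨c - c', by linear_combination -h⟩ hr
  have hx : x ≠ 0 := ((abs_nonneg _).trans_lt hr).ne'
  refine ⟨mul_right_cancel₀ hx ?_, by linarith⟩
  linarith

theorem abs_natCast_mul_add_sum_le {k h : ℕ} {n M : ℤ} {u : Multiset ℤ} (hM0 : 0 ≤ M)
    (hu : ∀ a ∈ u, |a| ≤ M) (hku : k + card u ≤ h) : |k * n + u.sum| ≤ h * (|n| + M) := by
  have hku' : (k : ℤ) + card u ≤ h := by exact_mod_cast hku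
  calc |k * n + u.sum| ≤ k * |n| + card u * M := by
        grw [abs_add_le, abs_mul, Nat.abs_cast, abs_sum_le_card_nsmul_s15 hu, nsmul_eq_mul]
    _ ≤ h * (|n| + M) := by nlinarith [abs_nonneg n]

section Construction

variable {h : ℕ}

/- Over `F ∪ {x, y}` a multiset `j • x + k • y + s₀` has sum `(j - (h - 1) k) x + (k n + Σ s₀)`,
where the second term is too small to absorb a multiple of `x`. So two equal sums have the same
coefficient of `x`, and then also the same `k` unless one side is `(h - 1) • x + y` and the other a
representation of `n` by `F`. -/
theorem IsBhSet.insert_insert {F : Set ℤ} (hF : IsBhSet h F) {n M x : ℤ} (hM0 : 0 ≤ M)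
    (hM : ∀ a ∈ F, |a| ≤ M) (hx : 2 * h * (|n| + M) < x) (hn : ¬(repMultisets F h n).Nonempty) :
    IsBhSet h (insert x (insert (n - (h - 1) * x) F)) := by
  set y := n - (h - 1) * x
  have hsum (j k : ℕ) (u : Multiset ℤ) :
      (replicate j x + replicate k y + u).sum = (j - (h - 1) * k) * x + (k * n + u.sum) := by
    simp only [sum_add, sum_replicate, nsmul_eq_mul, y]
    ring
  have hk_le {j k j' k' : ℕ} {s₀ t₀ : Multiset ℤ} (hs₀ : ∀ a ∈ s₀, a ∈ F)
      (hs : j + k + card s₀ ≤ h) (ht : j' + k' + card t₀ = j + k + card s₀)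
      (hc : (j : ℤ) - (h - 1) * k = j' - (h - 1) * k') (hr : k * n + s₀.sum = k' * n + t₀.sum) :
      k' ≤ k := by
    by_contra! hkk
    have hs' : (j : ℤ) + k + card s₀ ≤ h := by exact_mod_cast hs
    have ht' : (j' : ℤ) + k' + card t₀ = j + k + card s₀ := by exact_mod_cast ht
    have hkk' : (k : ℤ) + 1 ≤ k' := by exact_mod_cast hkk
    obtain ⟨rfl, rfl, ht₀, hs₀h⟩ : k = 0 ∧ k' = 1 ∧ card t₀ = 0 ∧ card s₀ = h := by
      refine ⟨?_, ?_, ?_, ?_⟩ <;> zify <;> nlinarith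
    rw [card_eq_zero.1 ht₀] at hr
    exact hn ⟨s₀, hs₀h, hs₀, by simpa using hr⟩
  intro s t hs ht hsA htA hst
  obtain ⟨j, k, s₀, rfl, hs₀⟩ := exists_eq_replicate_add_replicate_add_s15 hsA
  obtain ⟨j', k', t₀, rfl, ht₀⟩ := exists_eq_replicate_add_replicate_add_s15 htA
  simp only [card_add, card_replicate] at hs ht
  rw [hsum, hsum] at hst
  have hclose : |k' * n + t₀.sum - (k * n + s₀.sum)| < x :=
    calc |k' * n + t₀.sum - (k * n + s₀.sum)| ≤ h * (|n| + M) + h * (|n| + M) := by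
          grw [abs_sub,
            abs_natCast_mul_add_sum_le (h := h) hM0 (fun a ha => hM a (ht₀ a ha)) (by omega),
            abs_natCast_mul_add_sum_le (h := h) hM0 (fun a ha => hM a (hs₀ a ha)) (by omega)]
      _ < x := by linarith
  obtain ⟨hc, hr⟩ := Int.eq_and_eq_of_mul_add_eq_mul_add_s15 hclose hst
  obtain rfl : k = k' :=
    le_antisymm (hk_le ht₀ (by omega) ht.symm hc.symm hr.symm) (hk_le hs₀ hs ht hc hr)
  obtain rfl : j = j' := by exact_mod_cast (by linarith : (j : ℤ) = j')
  rw [hF (by omega) (by omega) hs₀ ht₀ (by linarith)]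

theorem exists_isBhSet_superset_repMultisets_nonempty (hh : 1 ≤ h) (F : Finset ℤ)
    (hF : IsBhSet h (F : Set ℤ)) (n : ℤ) :
    ∃ F' : Finset ℤ, F ⊆ F' ∧ IsBhSet h (F' : Set ℤ) ∧
      (repMultisets (F' : Set ℤ) h n).Nonempty := by
  by_cases hn : (repMultisets (F : Set ℤ) h n).Nonempty
  · exact ⟨F, subset_rfl, hF, hn⟩
  set M := ∑ a ∈ F, |a|
  set x := 2 * h * (|n| + M) + 1
  refine ⟨insert x (insert (n - (h - 1) * x) F), by grind, ?_, ?_⟩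
  · push_cast
    exact hF.insert_insert (Finset.sum_nonneg fun a _ => abs_nonneg a)
      (fun a ha => Finset.single_le_sum (fun b _ => abs_nonneg b) ha) (lt_add_one _) hn
  · refine ⟨replicate (h - 1) x + {n - (h - 1) * x}, by simp; omega, fun a ha => ?_, ?_⟩
    · rcases mem_add.1 ha with ha | ha
      · simp [eq_of_mem_replicate ha]
      · simp [mem_singleton.1 ha]
    · simp [Nat.cast_sub hh]

theorem exists_monotone_seq_forall_exists {γ β : Type*} [Preorder γ] [Countable β] [Nonempty β]
    {P : γ → Prop} {Q : β → γ → Prop} {x₀ : γ} (h₀ : P x₀)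
    (hext : ∀ x, P x → ∀ b, ∃ y, x ≤ y ∧ P y ∧ Q b y) :
    ∃ f : ℕ → γ, Monotone f ∧ (∀ t, P (f t)) ∧ ∀ b, ∃ t, Q b (f t) := by
  obtain ⟨e, he⟩ := exists_surjective_nat β
  choose! next hle hP hQ using hext
  let f : ℕ → γ := fun t => Nat.rec x₀ (fun t x => next x (e t)) t
  have hfP : ∀ t, P (f t) := fun t => Nat.rec h₀ (fun t ih => hP _ ih _) t
  refine ⟨f, monotone_nat_of_le_succ fun t => hle _ (hfP t) _, hfP, fun b => ?_⟩
  obtain ⟨t, rfl⟩ := he b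
  exact ⟨t + 1, hQ _ (hfP t) _⟩

theorem exists_forall_encard_repMultisets_eq_one (hh : 1 ≤ h) :
    ∃ A : Set ℤ, ∀ n, (repMultisets A h n).encard = 1 := by
  obtain ⟨F, hmono, hFBh, hFrep⟩ := exists_monotone_seq_forall_exists
    (P := fun F : Finset ℤ => IsBhSet h (F : Set ℤ)) (x₀ := ∅) (by simpa using isBhSet_empty)
    (exists_isBhSet_superset_repMultisets_nonempty hh)
  have hcoe_mono : Monotone fun t => (F t : Set ℤ) :=
    fun _ _ hst => Finset.coe_subset.2 (hmono hst)
  have hBh : IsBhSet h (⋃ t, (F t : Set ℤ)) := isBhSet_iUnion hcoe_mono.directed_le hFBh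
  refine ⟨⋃ t, (F t : Set ℤ), fun n => ?_⟩
  obtain ⟨t, s, hs, hsF, hsn⟩ := hFrep n
  rw [Set.encard_eq_one, Set.exists_eq_singleton_iff_nonempty_subsingleton]
  exact ⟨⟨s, hs, fun a ha => Set.mem_iUnion.2 ⟨t, hsF a ha⟩, hsn⟩, hBh.subsingleton_repMultisets n⟩

end Construction

section Translate

variable {α : Type*} [AddCommGroup α] {h : ℕ}

theorem repMultisets_preimage_add (A : Set α) (n k : α) :
    repMultisets ((· + k) ⁻¹' A) h n = map (· + k) ⁻¹' repMultisets A h (n + h • k) := by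
  ext s
  simp only [repMultisets, Set.mem_ofPred_eq, Set.mem_preimage, card_map, mem_map,
    forall_exists_index, and_imp, forall_apply_eq_imp_iff₂, sum_map_add, map_id', map_const',
    sum_replicate]
  constructor
  · rintro ⟨rfl, hA, rfl⟩
    exact ⟨rfl, hA, rfl⟩
  · rintro ⟨rfl, hA, hn⟩
    exact ⟨rfl, hA, add_right_cancel hn⟩

theorem encard_repMultisets_preimage_add (A : Set α) (n k : α) :
    (repMultisets ((· + k) ⁻¹' A) h n).encard = (repMultisets A h (n + h • k)).encard := by
  rw [repMultisets_preimage_add, Set.encard_preimage_of_bijective]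
  exact ⟨map_injective (add_left_injective k),
    map_surjective_of_surjective (Equiv.addRight k).surjective⟩

theorem eq_zero_of_add_mem_of_sub_mem {A : Set α} {a d : α} (hh : 2 ≤ h)
    (hA : (repMultisets A h (h • a)).Subsingleton) (ha : a ∈ A) (had : a + d ∈ A)
    (hsd : a - d ∈ A) : d = 0 := by
  obtain ⟨m, rfl⟩ := Nat.exists_eq_add_of_le' hh
  have hrep : (a + d) ::ₘ (a - d) ::ₘ replicate m a = replicate (m + 2) a := by
    refine hA ⟨by simp, ?_, ?_⟩ ⟨card_replicate _ _, fun b hb => eq_of_mem_replicate hb ▸ ha,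
      sum_replicate _ _⟩
    · simp only [mem_cons]
      rintro b (rfl | rfl | hb)
      exacts [had, hsd, eq_of_mem_replicate hb ▸ ha]
    · simp only [sum_cons, sum_replicate]
      rw [add_nsmul, two_nsmul]
      abel
  have hd : a + d = a := eq_of_mem_replicate (hrep ▸ mem_cons_self _ _)
  simpa using hd

theorem injective_preimage_add {A : Set α} (hh : 2 ≤ h)
    (hA : ∀ n, (repMultisets A h n).encard = 1) :
    Function.Injective fun k : α => (· + k) ⁻¹' A := by
  intro k k' hkk
  have hmem (b : α) : b + k ∈ A ↔ b + k' ∈ A := Set.ext_iff.1 hkk b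
  obtain ⟨s, hs, hsA, -⟩ := Set.one_le_encard_iff_nonempty.1 (hA 0).ge
  obtain ⟨a, ha⟩ := card_pos_iff_exists_mem.1 (by omega : 0 < card s)
  refine sub_eq_zero.1 (eq_zero_of_add_mem_of_sub_mem hh
    (Set.encard_le_one_iff_subsingleton.1 (hA _).le) (hsA a ha) ?_ ?_)
  · simpa [add_sub, sub_add_eq_add_sub] using (hmem (a - k')).2 (by simpa using hsA a ha)
  · simpa [sub_sub_eq_add_sub, sub_add_eq_add_sub] using
      (hmem (a - k)).1 (by simpa using hsA a ha)

end Translate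

/-- For `h ≥ 2` there are infinitely many unique representation bases of
order `h` for the integers. -/
theorem infinitely_many_unique_representation_bases (h : ℕ) (hh : 2 ≤ h) :
    {A : Set ℤ | ∀ n : ℤ, repFn A h n = 1}.Infinite := by
  obtain ⟨A, hA⟩ := exists_forall_encard_repMultisets_eq_one (one_le_two.trans hh)
  simp_rw [repFn_eq_encard_repMultisets]
  exact Set.infinite_of_injective_forall_mem (injective_preimage_add hh hA)
    fun k n => (encard_repMultisets_preimage_add A n k).trans (hA _)
end

section
/- If A ⊆ ℕ₀ and B ⊆ ℕ₀ are sets of nonnegative integers with r_{A,h}(n) = r_{B,h}(n) for all n ∈ ℕ₀, where h ≥ 1, then A = B. -/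
/-!
By strong induction, suppose `A` and `B` agree below `N`, and `N ∈ A \ B`. Let `a = min A ≤ N`;
then `B` has no element below `a` either. Every representation of `s = (h - 1) a + N` as a sum of
`h` elements of `A` (or of `B`) has all parts in `[a, N]`, and either all parts are `< N` or it is
`a + ⋯ + a + N`. The representations of the first kind are common to `A` and `B`, while
`a + ⋯ + a + N` is one for `A` only, so `r_{A,h}(s) > r_{B,h}(s)`.
-/

/-- The representation function of order `h` of a set of nonnegative integers. -/
noncomputable def repFnN (A : Set ℕ) (h : ℕ) (n : ℕ) : ℕ∞ :=
  {g : Fin h → ℕ | Monotone g ∧ (∀ i, g i ∈ A) ∧ ∑ i, g i = n}.encard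

open Finset

def repSet (X : Set ℕ) (h n : ℕ) : Set (Fin h → ℕ) :=
  {g | Monotone g ∧ (∀ i, g i ∈ X) ∧ ∑ i, g i = n}

theorem repFnN_eq_encard_repSet (X : Set ℕ) (h n : ℕ) :
    repFnN X h n = (repSet X h n).encard := rfl

theorem repSet_mono {X Y : Set ℕ} (hXY : X ⊆ Y) (h n : ℕ) : repSet X h n ⊆ repSet Y h n :=
  fun _ ⟨hg, hX, hs⟩ => ⟨hg, fun i => hXY (hX i), hs⟩

theorem repSet_finite (X : Set ℕ) (h n : ℕ) : (repSet X h n).Finite := by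
  refine (Set.Finite.pi' fun _ : Fin h => Set.finite_Iic n).subset fun g ⟨_, _, hs⟩ i => ?_
  exact hs ▸ single_le_sum (fun j _ => Nat.zero_le (g j)) (mem_univ i)

theorem monotone_snoc_const {m a N : ℕ} (haN : a ≤ N) :
    Monotone (Fin.snoc (fun _ : Fin m => a) N : Fin (m + 1) → ℕ) := by
  intro i j hij
  induction j using Fin.lastCases with
  | last => induction i using Fin.lastCases <;> simp [haN]
  | cast j =>
    induction i using Fin.lastCases with
    | last => exact absurd hij (not_le.2 (Fin.castSucc_lt_last j))
    | cast i => simp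

theorem snoc_const_mem_repSet {X : Set ℕ} {m a N : ℕ} (haN : a ≤ N) (ha : a ∈ X) (hN : N ∈ X) :
    (Fin.snoc (fun _ : Fin m => a) N : Fin (m + 1) → ℕ) ∈ repSet X (m + 1) (m * a + N) := by
  refine ⟨monotone_snoc_const haN, fun i => ?_, by simp [Fin.sum_snoc]⟩
  induction i using Fin.lastCases <;> simp [ha, hN]

theorem mem_repSet_inter_Iio_or_eq_snoc {X : Set ℕ} {m a N : ℕ} (ha : ∀ x ∈ X, a ≤ x)
    {g : Fin (m + 1) → ℕ} (hg : g ∈ repSet X (m + 1) (m * a + N)) :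
    g ∈ repSet (X ∩ Set.Iio N) (m + 1) (m * a + N) ∨ g = Fin.snoc (fun _ : Fin m => a) N := by
  obtain ⟨hmono, hX, hsum⟩ := hg
  by_cases hlow : ∀ i, g i < N
  · exact Or.inl ⟨hmono, fun i => ⟨hX i, hlow i⟩, hsum⟩
  right
  obtain ⟨i, hi⟩ := not_forall.1 hlow
  have hlast : N ≤ g (Fin.last m) := (not_lt.1 hi).trans (hmono (Fin.le_last i))
  rw [Fin.sum_univ_castSucc] at hsum
  have hinit : ∑ _i : Fin m, a ≤ ∑ i : Fin m, g i.castSucc :=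
    sum_le_sum fun i _ => ha _ (hX _)
  rw [sum_const, card_univ, Fintype.card_fin, smul_eq_mul] at hinit
  have hinit_eq : ∀ i : Fin m, a = g i.castSucc := by
    refine fun i => (sum_eq_sum_iff_of_le fun i _ => ha _ (hX _)).1 ?_ i (mem_univ i)
    simp only [sum_const, card_univ, Fintype.card_fin, smul_eq_mul]
    omega
  funext i
  induction i using Fin.lastCases with
  | last => simp only [Fin.snoc_last]; omega
  | cast i => simp [hinit_eq i]

theorem mem_of_repFnN_eq {m N : ℕ} {A B : Set ℕ}
    (hAB : ∀ n, repFnN A (m + 1) n = repFnN B (m + 1) n) (hbelow : ∀ k < N, k ∈ A ↔ k ∈ B)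
    (hN : N ∈ A) : N ∈ B := by
  by_contra hNB
  set a := sInf A
  have haA : a ∈ A := Nat.sInf_mem ⟨N, hN⟩
  have haN : a ≤ N := Nat.sInf_le hN
  have hminA : ∀ x ∈ A, a ≤ x := fun x hx => Nat.sInf_le hx
  have hminB : ∀ x ∈ B, a ≤ x := fun x hx => by
    by_contra! hxa
    exact hxa.not_ge (hminA x ((hbelow x (hxa.trans_le haN)).2 hx))
  have hBA : B ∩ Set.Iio N = A ∩ Set.Iio N :=
    Set.ext fun x => and_congr_left fun hxN => (hbelow x hxN).symm
  set s := m * a + N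
  set t : Fin (m + 1) → ℕ := Fin.snoc (fun _ : Fin m => a) N
  set C := repSet (A ∩ Set.Iio N) (m + 1) s
  have hA : repSet A (m + 1) s = insert t C := by
    refine subset_antisymm (fun g hg => ?_) ?_
    · exact (mem_repSet_inter_Iio_or_eq_snoc hminA hg).elim Or.inr Or.inl
    · exact Set.insert_subset (snoc_const_mem_repSet haN haA hN)
        (repSet_mono Set.inter_subset_left _ _)
  have hB : repSet B (m + 1) s ⊆ C := by
    intro g hg
    rcases mem_repSet_inter_Iio_or_eq_snoc hminB hg with hgC | rfl
    · rwa [hBA] at hgC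
    · exact absurd (by simpa [t] using hg.2.1 (Fin.last m)) hNB
  have htC : t ∉ C := fun ht => by simpa [t] using (ht.2.1 (Fin.last m)).2
  have hlt : repFnN B (m + 1) s < repFnN A (m + 1) s := calc
    repFnN B (m + 1) s ≤ C.encard := Set.encard_le_encard hB
    _ < (insert t C).encard := (repSet_finite _ _ _).encard_lt_encard (Set.ssubset_insert htC)
    _ = repFnN A (m + 1) s := by rw [← hA, repFnN_eq_encard_repSet]
  exact hlt.ne' (hAB s)

/-- Two sets of nonnegative integers with the same representation function of
order `h ≥ 1` are equal. -/
theorem unique_set_with_representation_function (h : ℕ) (hh : 1 ≤ h)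
    (A B : Set ℕ) (hAB : ∀ n : ℕ, repFnN A h n = repFnN B h n) :
    A = B := by
  obtain ⟨m, rfl⟩ := Nat.exists_eq_add_of_le' hh
  ext n
  induction n using Nat.strong_induction_on with
  | _ n ih =>
    exact ⟨mem_of_repFnN_eq hAB ih,
      mem_of_repFnN_eq (fun k => (hAB k).symm) (fun k hk => (ih k hk).symm)⟩
end
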